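/- The polynomial p(z) = (2z+1)³(2z²−3z+18)/432 + 1 is a Shabat polynomial in Zapponi form: every critical value of p lies in {1, −1} (its critical points are −1/2, where p(−1/2) = 1, and the two complex roots of 20z²−20z+105, where p takes the value −1), the sum of the distinct complex roots of p − 1 equals 1, and the sum of the distinct complex roots of p + 1 equals −1. -/
import Mathlib


open Polynomial

/-- The polynomial `p(z) = (2z+1)³(2z²−3z+18)/432 + 1`. -/
noncomputable def pSZ : Polynomial ℂ :=
  Polynomial.C (1 / 432 : ℂ) * (2 * Polynomial.X + 1) ^ 3 *
    (2 * Polynomial.X ^ 2 - 3 * Polynomial.X + 18) + 1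

noncomputable def sSZ : ℂ := (Real.sqrt 135 : ℝ) * Complex.I
noncomputable def tSZ : ℂ := (Real.sqrt 5 : ℝ) * Complex.I

lemma sSZ_sq : sSZ ^ 2 = -135 := by
  have h : (Real.sqrt 135 : ℝ) ^ 2 = 135 := Real.sq_sqrt (by norm_num)
  unfold sSZ
  rw [mul_pow, Complex.I_sq, ← Complex.ofReal_pow, h]
  norm_num

lemma tSZ_sq : tSZ ^ 2 = -5 := by
  have h : (Real.sqrt 5 : ℝ) ^ 2 = 5 := Real.sq_sqrt (by norm_num)
  unfold tSZ
  rw [mul_pow, Complex.I_sq, ← Complex.ofReal_pow, h]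
  norm_num

lemma sSZ_im : sSZ.im = Real.sqrt 135 := by simp [sSZ]

lemma tSZ_im : tSZ.im = Real.sqrt 5 := by simp [tSZ]

lemma sqrt135_pos : (0:ℝ) < Real.sqrt 135 := Real.sqrt_pos.mpr (by norm_num)

lemma sqrt5_pos : (0:ℝ) < Real.sqrt 5 := Real.sqrt_pos.mpr (by norm_num)

lemma pSZ_fact1 : pSZ - 1 = C (1/27 : ℂ) * ((X - C (-1/2 : ℂ)) ^ 3 *
    ((X - C ((3 + sSZ)/4)) * (X - C ((3 - sSZ)/4)))) := by
  apply Polynomial.funext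
  intro x
  simp [pSZ]
  linear_combination ((1/432 : ℂ) * (x + 1/2)^3) * sSZ_sq

lemma pSZ_fact2 : pSZ + 1 = C (1/27 : ℂ) * ((X - C (-2 : ℂ)) *
    ((X - C (1/2 + tSZ)) ^ 2 * (X - C (1/2 - tSZ)) ^ 2)) := by
  apply Polynomial.funext
  intro x
  simp [pSZ]
  linear_combination ((1/27 : ℂ) * (x + 2) * (5 - tSZ^2 + 2*(x - 1/2)^2)) * tSZ_sq

lemma pSZ_deriv_eval (z : ℂ) : (Polynomial.derivative pSZ).eval z =
    (1/432 : ℂ) * (2*z+1)^2 * (20*z^2 - 20*z + 105) := by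
  have h : Polynomial.derivative pSZ =
      C (1/432 : ℂ) * (2*X+1)^2 * (20*X^2 - 20*X + 105) := by
    unfold pSZ
    simp only [derivative_add, derivative_mul, derivative_pow, derivative_sub,
      derivative_C, derivative_X, derivative_one, derivative_ofNat,
      show (C ((3:ℕ):ℂ) : Polynomial ℂ) = 3 from rfl,
      show (C ((2:ℕ):ℂ) : Polynomial ℂ) = 2 from rfl]
    ring
  rw [h]
  simp only [eval_mul, eval_add, eval_sub, eval_pow, eval_C, eval_X, eval_one,
    eval_ofNat]

lemma pSZ_roots1 : (pSZ - 1).roots =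
    3 • {(-1/2 : ℂ)} + ({(3 + sSZ)/4} + {(3 - sSZ)/4}) := by
  rw [pSZ_fact1, roots_C_mul _ (by norm_num : (1/27:ℂ) ≠ 0),
    roots_mul (mul_ne_zero (pow_ne_zero _ (X_sub_C_ne_zero _))
      (mul_ne_zero (X_sub_C_ne_zero _) (X_sub_C_ne_zero _))),
    roots_mul (mul_ne_zero (X_sub_C_ne_zero _) (X_sub_C_ne_zero _)),
    roots_pow, roots_X_sub_C, roots_X_sub_C, roots_X_sub_C]

lemma pSZ_roots2 : (pSZ + 1).roots =
    {(-2 : ℂ)} + (2 • {(1/2 + tSZ : ℂ)} + 2 • {(1/2 - tSZ : ℂ)}) := by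
  rw [pSZ_fact2, roots_C_mul _ (by norm_num : (1/27:ℂ) ≠ 0),
    roots_mul (mul_ne_zero (X_sub_C_ne_zero _)
      (mul_ne_zero (pow_ne_zero _ (X_sub_C_ne_zero _))
        (pow_ne_zero _ (X_sub_C_ne_zero _)))),
    roots_mul (mul_ne_zero (pow_ne_zero _ (X_sub_C_ne_zero _))
      (pow_ne_zero _ (X_sub_C_ne_zero _))),
    roots_pow, roots_pow, roots_X_sub_C, roots_X_sub_C, roots_X_sub_C]

/-- `p(z) = (2z+1)³(2z²−3z+18)/432 + 1` is a Shabat polynomial in Zapponi form: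
its critical points are `-1/2`, where `p(-1/2) = 1`, and the two roots of
`20z² − 20z + 105`, where `p` takes the value `-1`; every critical value lies in
`{1, -1}`, and the sums of the distinct roots of `p - 1` and `p + 1` are `1` and
`-1` respectively. -/
theorem pSZ_is_shabat_zapponi :
    (∀ z : ℂ, (Polynomial.derivative pSZ).eval z = 0 ↔
      z = -1/2 ∨ 20 * z ^ 2 - 20 * z + 105 = 0) ∧
    pSZ.eval (-1/2 : ℂ) = 1 ∧
    (∀ z : ℂ, 20 * z ^ 2 - 20 * z + 105 = 0 → pSZ.eval z = -1) ∧
    (∀ z : ℂ, (Polynomial.derivative pSZ).eval z = 0 →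
      pSZ.eval z = 1 ∨ pSZ.eval z = -1) ∧
    ((pSZ - 1).roots.toFinset.sum id) = 1 ∧
    ((pSZ + 1).roots.toFinset.sum id) = -1 := by
  have hcrit : ∀ z : ℂ, (Polynomial.derivative pSZ).eval z = 0 ↔
      z = -1/2 ∨ 20 * z ^ 2 - 20 * z + 105 = 0 := by
    intro z
    rw [pSZ_deriv_eval]
    constructor
    · intro h
      rcases mul_eq_zero.mp h with h | h
      · rcases mul_eq_zero.mp h with h | h
        · norm_num at h
        · left
          have h2 : (2*z+1 : ℂ) = 0 := by
            exact pow_eq_zero_iff (by norm_num) |>.mp h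
          linear_combination h2 / 2
      · right; exact h
    · rintro (rfl | h)
      · norm_num
      · rw [h, mul_zero]
  have heval1 : pSZ.eval (-1/2 : ℂ) = 1 := by
    simp [pSZ]
    norm_num
  have heval2 : ∀ z : ℂ, 20 * z ^ 2 - 20 * z + 105 = 0 → pSZ.eval z = -1 := by
    intro z h
    simp [pSZ]
    linear_combination ((z + 2) * (20*z^2 - 20*z + 105) / 10800) * h
  refine ⟨hcrit, heval1, heval2, ?_, ?_, ?_⟩
  · intro z hz
    rcases (hcrit z).mp hz with rfl | h
    · exact Or.inl heval1
    · exact Or.inr (heval2 z h)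
  · -- sum of distinct roots of pSZ - 1
    have hne1 : ((3 + sSZ)/4 : ℂ) ≠ -1/2 := by
      intro h
      have := congrArg Complex.im h
      simp [sSZ_im] at this
    have hne2 : ((3 - sSZ)/4 : ℂ) ≠ -1/2 := by
      intro h
      have := congrArg Complex.im h
      simp [sSZ_im] at this
    have hne3 : ((3 + sSZ)/4 : ℂ) ≠ (3 - sSZ)/4 := by
      intro h
      have := congrArg Complex.im h
      simp [sSZ_im] at this
      nlinarith [sqrt135_pos, this]
    have hfin : (pSZ - 1).roots.toFinset =
        {(-1/2 : ℂ), (3 + sSZ)/4, (3 - sSZ)/4} := by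
      rw [pSZ_roots1]
      ext x
      simp [Multiset.mem_nsmul]
      tauto
    rw [hfin]
    rw [Finset.sum_insert (by
        simp only [Finset.mem_insert, Finset.mem_singleton, not_or]
        exact ⟨fun h => hne1 h.symm, fun h => hne2 h.symm⟩),
      Finset.sum_insert (by simp only [Finset.mem_singleton]; exact hne3),
      Finset.sum_singleton]
    simp only [id]
    ring
  · -- sum of distinct roots of pSZ + 1
    have hne1 : (1/2 + tSZ : ℂ) ≠ -2 := by
      intro h
      have := congrArg Complex.im h
      simp [tSZ_im] at this
    have hne2 : (1/2 - tSZ : ℂ) ≠ -2 := by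
      intro h
      have := congrArg Complex.im h
      simp [tSZ_im] at this
    have hne3 : (1/2 + tSZ : ℂ) ≠ 1/2 - tSZ := by
      intro h
      have := congrArg Complex.im h
      simp [tSZ_im] at this
      nlinarith [sqrt5_pos]
    have hfin : (pSZ + 1).roots.toFinset =
        {(-2 : ℂ), 1/2 + tSZ, 1/2 - tSZ} := by
      rw [pSZ_roots2]
      ext x
      simp [Multiset.mem_nsmul]
    rw [hfin]
    rw [Finset.sum_insert (by
        simp only [Finset.mem_insert, Finset.mem_singleton, not_or]
        exact ⟨fun h => hne1 h.symm, fun h => hne2 h.symm⟩),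
      Finset.sum_insert (by simp only [Finset.mem_singleton]; exact hne3),
      Finset.sum_singleton]
    simp only [id]
    ring
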